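/- arXiv:2512.10684 — 8 statements merged into one kernel-verified Lean document; each statement's English description precedes it below -/
import Mathlib

section
/- Let P : Σ* → Σo* be the natural projection (the monoid homomorphism erasing letters not in Σo ⊆ Σ). A language M ⊆ L is pre-normal w.r.t. L and P (i.e., M = P⁻¹(P(M)) ∩ L) if and only if its relative complement L \ M is pre-normal w.r.t. L and P (i.e., L \ M = P⁻¹(P(L \ M)) ∩ L). -/
open List Set

variable {α : Type*}

/-- Natural projection: erase letters outside `A`. -/
def proj (A : Set α) [DecidablePred (· ∈ A)] : List α → List α :=
  fun s => s.filter (fun a => decide (a ∈ A))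

/-- Prefix-closure of a language. -/
def pref (M : Set (List α)) : Set (List α) := {t | ∃ s ∈ M, t <+: s}

/-- `K·Σ*` : all extensions of strings of `K`. -/
def catStar (K : Set (List α)) : Set (List α) := {w | ∃ s ∈ K, ∃ t, w = s ++ t}

/-- A language is prefix-closed if it contains every prefix of each member. -/
def prefixClosed (M : Set (List α)) : Prop := ∀ s ∈ M, ∀ t, t <+: s → t ∈ M

/-- pre-normality of M w.r.t. L and P is equivalent to
    pre-normality of L \ M w.r.t. L and P. -/
theorem preNormal_iff_compl_preNormal
    (So : Set α) [DecidablePred (· ∈ So)]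
    (M L : Set (List α)) (hML : M ⊆ L) :
    (M = {s | proj So s ∈ proj So '' M} ∩ L) ↔
      (L \ M = {s | proj So s ∈ proj So '' (L \ M)} ∩ L) := by
  constructor
  · intro h
    ext s
    constructor
    · intro hs
      exact ⟨⟨s, hs, rfl⟩, hs.1⟩
    · rintro ⟨⟨t, ht, hpt⟩, hsL⟩
      refine ⟨hsL, fun hsM => ht.2 ?_⟩
      rw [h]
      exact ⟨⟨s, hsM, hpt.symm⟩, ht.1⟩
  · intro h
    ext s
    constructor
    · intro hs
      exact ⟨⟨s, hs, rfl⟩, hML hs⟩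
    · rintro ⟨⟨t, htM, hpt⟩, hsL⟩
      by_contra hsM
      have hsLM : s ∈ L \ M := ⟨hsL, hsM⟩
      rw [h] at hsLM
      obtain ⟨⟨u, huLM, hpu⟩, -⟩ := hsLM
      have : t ∈ L \ M := by
        rw [h]
        exact ⟨⟨u, huLM, hpu.trans hpt.symm⟩, hML htM⟩
      exact this.2 htM
end

section
/- The language Ψf^{-k} := P⁻¹P[Ψ(Σf)/P⁻¹(Σo^{≤k})]·Σ* ∩ prefixes(Ψ(Σf)) is pre-normal w.r.t. prefixes(Ψ(Σf)) and P, i.e., P⁻¹(P(Ψf^{-k})) ∩ prefixes(Ψ(Σf)) = Ψf^{-k}. -/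
open List Set

variable {α : Type*}

/-- Ψf^{-k} = P⁻¹P[Ψ(Sf)/P⁻¹(So^{≤k})]·Σ* ∩ prefixes(Ψ(Sf)). -/
def psiMinus (So : Set α) [DecidablePred (· ∈ So)] (Psi : Set (List α)) (k : ℕ) :
    Set (List α) :=
  catStar {s | proj So s ∈ proj So ''
      ({t | ∃ u ∈ {w | proj So w ∈ {v : List α | (∀ a ∈ v, a ∈ So) ∧ v.length ≤ k}},
        t ++ u ∈ Psi})} ∩ pref Psi

/-- Any prefix of a filtered list is the filter of some prefix. -/
lemma prefix_of_filter {p : α → Bool} :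
    ∀ {s v : List α}, v <+: s.filter p → ∃ s1, s1 <+: s ∧ s1.filter p = v := by
  intro s
  induction s with
  | nil =>
    intro v hv
    simp only [List.filter_nil, List.prefix_nil] at hv
    exact ⟨[], by simp [hv]⟩
  | cons a s ih =>
    intro v hv
    by_cases hpa : p a
    · rw [List.filter_cons_of_pos hpa] at hv
      rcases v with _ | ⟨b, v'⟩
      · exact ⟨[], by simp⟩
      · rcases hv with ⟨t, ht⟩
        simp only [List.cons_append, List.cons.injEq] at ht
        obtain ⟨rfl, ht⟩ := ht
        obtain ⟨s1, hs1, hfs1⟩ := ih ⟨t, ht⟩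
        exact ⟨b :: s1, List.cons_prefix_cons.mpr ⟨rfl, hs1⟩,
          by rw [List.filter_cons_of_pos hpa, hfs1]⟩
    · rw [List.filter_cons_of_neg (by simpa using hpa)] at hv
      obtain ⟨s1, hs1, hfs1⟩ := ih hv
      exact ⟨a :: s1, List.cons_prefix_cons.mpr ⟨rfl, hs1⟩,
        by rw [List.filter_cons_of_neg (by simpa using hpa), hfs1]⟩

/-- Ψf^{-k} is pre-normal w.r.t. prefixes(Ψ(Sf)) and P. -/
theorem psiMinus_preNormal
    (So : Set α) [DecidablePred (· ∈ So)] (Psi : Set (List α)) (k : ℕ) :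
    {s | proj So s ∈ proj So '' psiMinus So Psi k} ∩ pref Psi = psiMinus So Psi k := by
  ext s
  constructor
  · rintro ⟨⟨w, hw, hproj⟩, hpref⟩
    refine ⟨?_, hpref⟩
    obtain ⟨⟨w1, hw1, w2, rfl⟩, -⟩ := hw
    have hpre : proj So w1 <+: proj So s := by
      rw [← hproj]
      show proj So w1 <+: proj So (w1 ++ w2)
      simp only [proj, List.filter_append]
      exact List.prefix_append _ _
    obtain ⟨s1, hs1, hfs1⟩ := prefix_of_filter hpre
    obtain ⟨t, rfl⟩ := hs1
    exact ⟨s1, by rw [Set.mem_setOf_eq, show proj So s1 = proj So w1 from hfs1]; exact hw1,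
      t, rfl⟩
  · intro h
    exact ⟨⟨s, h, rfl⟩, h.2⟩
end

section
/- The relative complement prefixes(Ψ(Σf)) \ Ψf^{-k} is prefix-closed, where Ψf^{-k} = P⁻¹P[Ψ(Σf)/P⁻¹(Σo^{≤k})]·Σ* ∩ prefixes(Ψ(Σf)). -/
open List Set

variable {α : Type*}

/-- prefixes(Ψ(Sf)) \ Ψf^{-k} is prefix-closed. -/
theorem psiMinus_compl_prefixClosed
    (So : Set α) [DecidablePred (· ∈ So)] (Psi : Set (List α)) (k : ℕ) :
    prefixClosed (pref Psi \ psiMinus So Psi k) := by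
  rintro s ⟨hsP, hsN⟩ t hts
  refine ⟨?_, fun htM => hsN ?_⟩
  · obtain ⟨w, hw, hsw⟩ := hsP
    exact ⟨w, hw, hts.trans hsw⟩
  · obtain ⟨⟨s', hs', u, rfl⟩, _⟩ := htM
    obtain ⟨r, rfl⟩ := hts
    exact ⟨⟨s', hs', u ++ r, List.append_assoc ..⟩, hsP⟩
end

section
/- Monotonicity of pre-normality in the observation bound: if P⁻¹(P(Lf^{≥N})) ∩ L ⊆ Lf^{≥N}, then P⁻¹(P(Lf^{≥N+1})) ∩ L ⊆ Lf^{≥N+1}, where Lf^{≥N} = {s ∈ Lf : |P(s)| ≥ N}. -/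
open List Set

variable {α : Type*}

/-- monotonicity of pre-normality of Lf^{≥N} in N. -/
theorem preNormal_mono_obsBound
    (So : Set α) [DecidablePred (· ∈ So)]
    (L Lf : Set (List α)) (hf : Lf ⊆ L) (N : ℕ)
    (h : {s | proj So s ∈ proj So '' {s ∈ Lf | N ≤ (proj So s).length}} ∩ L ⊆
          {s ∈ Lf | N ≤ (proj So s).length}) :
    {s | proj So s ∈ proj So '' {s ∈ Lf | N + 1 ≤ (proj So s).length}} ∩ L ⊆
      {s ∈ Lf | N + 1 ≤ (proj So s).length} := by
  rintro s ⟨⟨t, ⟨htf, htN⟩, hpt⟩, hsL⟩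
  have hs := h ⟨⟨t, ⟨htf, Nat.le_of_succ_le htN⟩, hpt⟩, hsL⟩
  exact ⟨hs.1, hpt ▸ htN⟩
end

section
/- If a string s ∈ Ψ(Σf) has a prefix s' satisfying the prognosability condition (for every non-faulty t with P(t) = P(s') there exists n such that every extension t' of t within L of length at least n makes tt' faulty), then every longer prefix s's'' of s also satisfies this condition. -/
open List Set

variable {α : Type*}

/-- A prefix w of a fault-ending string satisfies the prognosability condition. -/
def progCond (So : Set α) [DecidablePred (· ∈ So)]
    (L Lf : Set (List α)) (w : List α) : Prop :=
  ∀ t ∈ L \ Lf, proj So t = proj So w →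
    ∃ n : ℕ, ∀ t', t ++ t' ∈ L → n ≤ t'.length → t ++ t' ∈ Lf


private lemma filter_split {p : α → Bool} :
    ∀ (t u v : List α), t.filter p = u ++ v →
      ∃ t1 t2, t = t1 ++ t2 ∧ t1.filter p = u ∧ t2.filter p = v := by
  intro t
  induction t with
  | nil =>
    intro u v h
    simp only [List.filter_nil] at h
    rcases List.append_eq_nil_iff.mp h.symm with ⟨hu, hv⟩
    exact ⟨[], [], by simp [hu, hv]⟩
  | cons a t ih =>
    intro u v h
    by_cases hp : p a
    · rw [List.filter_cons_of_pos hp] at h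
      cases u with
      | nil =>
        exact ⟨[], a :: t, by simpa [List.filter_cons_of_pos hp] using h.symm ▸ rfl⟩
      | cons b u' =>
        simp only [List.cons_append, List.cons.injEq] at h
        obtain ⟨hab, hrest⟩ := h
        obtain ⟨t1, t2, ht, h1, h2⟩ := ih u' v hrest
        exact ⟨a :: t1, t2, by simp [ht], by rw [List.filter_cons_of_pos hp, h1, hab], h2⟩
    · rw [List.filter_cons_of_neg hp] at h
      obtain ⟨t1, t2, ht, h1, h2⟩ := ih u v h
      exact ⟨a :: t1, t2, by simp [ht], by simp [List.filter_cons_of_neg hp, h1], h2⟩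

/-- if a prefix s' of a fault-ending string s satisfies the
    prognosability condition, so does every longer prefix s'·s'' of s. -/
theorem progCond_of_longer_prefix
    (So : Set α) [DecidablePred (· ∈ So)]
    (L Lf Psi : Set (List α))
    (hL : prefixClosed L) (hfL : Lf ⊆ L)
    (hext : catStar Lf ∩ L ⊆ Lf) (hPsi : Psi ⊆ Lf)
    (s s' : List α) (hs : s ∈ Psi) (hs' : s' <+: s)
    (hcond : progCond So L Lf s') :
    ∀ s'' : List α, s' ++ s'' <+: s → progCond So L Lf (s' ++ s'') := by
  intro s'' hpre t ht hproj
  obtain ⟨htL, htf⟩ := ht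
  have hsplit : (proj So t) = proj So s' ++ proj So s'' := by
    simpa [proj, List.filter_append] using hproj
  obtain ⟨t1, t2, hteq, h1, h2⟩ := filter_split t _ _ hsplit
  have ht1L : t1 ∈ L := hL t htL t1 (hteq ▸ ⟨t2, rfl⟩)
  have ht1f : t1 ∉ Lf := by
    intro hf
    exact htf (hext ⟨⟨t1, hf, t2, hteq⟩, htL⟩)
  obtain ⟨n, hn⟩ := hcond t1 ⟨ht1L, ht1f⟩ h1
  refine ⟨n, fun t' htL' hlen => ?_⟩
  have : t1 ++ (t2 ++ t') ∈ Lf := by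
    apply hn
    · simpa [hteq, List.append_assoc] using htL'
    · simp only [List.length_append]
      omega
  simpa [hteq, List.append_assoc] using this
end

section
/- Pre-normality is preserved by the faulty-language composition: if K₁ is pre-normal w.r.t. L₁ and the local projection P¹₁,ₒ : Σ₁* → (Σ₁∩Σo)*, and K₂ is pre-normal w.r.t. L₂ and P²₂,ₒ : Σ₂* → (Σ₂∩Σo)*, then (K₁∥L₂) ∪ (L₁∥K₂) is pre-normal w.r.t. L₁∥L₂ and the global projection P : Σ* → Σo*, under the compatibility assumption Σ₁∩Σo∩Σ₂ = Σ₁∩Σ₂∩Σo (events observable in one component are observable in all components where they appear, so P∘incl commutes with local projections: P₁∘restriction properties hold, specifically P⁻¹P(Pᵢ⁻¹(Mᵢ)) ∩ Pᵢ⁻¹(Lᵢ) ⊆ Pᵢ⁻¹(Pᵢ,ₒ⁻¹Pᵢ,ₒ(Mᵢ) ∩ Lᵢ) for Mᵢ ⊆ Lᵢ). -/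
open List Set

variable {α : Type*}

/-- Synchronous product of A ⊆ Σ₁* and B ⊆ Σ₂*, as a language over Σ = Σ₁ ∪ Σ₂. -/
def sync (S1 S2 : Set α) [DecidablePred (· ∈ S1)] [DecidablePred (· ∈ S2)]
    (A B : Set (List α)) : Set (List α) :=
  {s | proj S1 s ∈ A} ∩ {s | proj S2 s ∈ B}

lemma proj_inter (A B : Set α) [DecidablePred (· ∈ A)] [DecidablePred (· ∈ B)]
    [DecidablePred (· ∈ A ∩ B)] (s : List α) :
    proj (A ∩ B) s = proj A (proj B s) := by
  simp only [proj, List.filter_filter]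
  apply List.filter_congr
  intro a _
  simp [Set.mem_inter_iff, Bool.and_comm]

lemma proj_inter_proj (A B : Set α) [DecidablePred (· ∈ A)] [DecidablePred (· ∈ B)]
    [DecidablePred (· ∈ A ∩ B)] (s : List α) :
    proj (A ∩ B) (proj A s) = proj (A ∩ B) s := by
  simp only [proj, List.filter_filter]
  apply List.filter_congr
  intro a _
  by_cases h : a ∈ A ∩ B
  · simp [h, h.1]
  · simp [h]

/-- pre-normality is preserved by the faulty-language composition
    (K₁∥L₂) ∪ (L₁∥K₂). -/
theorem preNormal_faultyComposition
    (S1 S2 So : Set α)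
    [DecidablePred (· ∈ S1)] [DecidablePred (· ∈ S2)] [DecidablePred (· ∈ So)]
    [DecidablePred (· ∈ S1 ∩ So)] [DecidablePred (· ∈ S2 ∩ So)]
    (hcompat : (S1 ∩ So) ∩ S2 = S1 ∩ (S2 ∩ So))
    (K1 L1 K2 L2 : Set (List α))
    (hK1 : K1 ⊆ L1) (hL1 : L1 ⊆ {w | ∀ a ∈ w, a ∈ S1})
    (hK2 : K2 ⊆ L2) (hL2 : L2 ⊆ {w | ∀ a ∈ w, a ∈ S2})
    (hn1 : {s | proj (S1 ∩ So) s ∈ proj (S1 ∩ So) '' K1} ∩ L1 = K1)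
    (hn2 : {s | proj (S2 ∩ So) s ∈ proj (S2 ∩ So) '' K2} ∩ L2 = K2) :
    {s | proj So s ∈ proj So '' (sync S1 S2 K1 L2 ∪ sync S1 S2 L1 K2)} ∩
        sync S1 S2 L1 L2 =
      sync S1 S2 K1 L2 ∪ sync S1 S2 L1 K2 := by
  have key : ∀ (A : Set α) (_ : DecidablePred (· ∈ A)) (_ : DecidablePred (· ∈ A ∩ So))
      (s t : List α), proj So s = proj So t →
      proj (A ∩ So) (proj A s) = proj (A ∩ So) (proj A t) := by
    intro A _ _ s t h
    rw [proj_inter_proj, proj_inter_proj, proj_inter, proj_inter, h]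
  ext s
  constructor
  · rintro ⟨⟨t, ht, hst⟩, hs1, hs2⟩
    rcases ht with ⟨ht1, ht2⟩ | ⟨ht1, ht2⟩
    · left
      refine ⟨?_, hs2⟩
      have : proj S1 s ∈ {u | proj (S1 ∩ So) u ∈ proj (S1 ∩ So) '' K1} ∩ L1 := by
        refine ⟨⟨proj S1 t, ht1, ?_⟩, hs1⟩
        exact key S1 _ _ t s hst
      rwa [hn1] at this
    · right
      refine ⟨hs1, ?_⟩
      have : proj S2 s ∈ {u | proj (S2 ∩ So) u ∈ proj (S2 ∩ So) '' K2} ∩ L2 := by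
        refine ⟨⟨proj S2 t, ht2, ?_⟩, hs2⟩
        exact key S2 _ _ t s hst
      rwa [hn2] at this
  · intro h
    refine ⟨⟨s, h, rfl⟩, ?_⟩
    rcases h with ⟨h1, h2⟩ | ⟨h1, h2⟩
    · exact ⟨hK1 h1, h2⟩
    · exact ⟨h1, hK2 h2⟩
end

section
/- Pre-normality is preserved by synchronous product: if Kᵢ is pre-normal w.r.t. Lᵢ and local projection Pⁱᵢ,ₒ for i=1,2 (under the observation compatibility assumption Σ₁,ₒ∩Σ₂ = Σ₁∩Σ₂,ₒ), then K₁∥K₂ is pre-normal w.r.t. L₁∥L₂ and the global projection P : Σ* → Σo*. -/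
open List Set

variable {α : Type*}

lemma proj_proj (A B : Set α) [DecidablePred (· ∈ A)] [DecidablePred (· ∈ B)]
    [DecidablePred (· ∈ A ∩ B)] (s : List α) :
    proj A (proj B s) = proj (A ∩ B) s := by
  simp only [proj, List.filter_filter]
  apply List.filter_congr
  intro a _
  by_cases hA : a ∈ A <;> by_cases hB : a ∈ B <;>
    simp [hA, hB, Set.mem_inter_iff]

/-- pre-normality is preserved by the synchronous product. -/
theorem preNormal_sync
    (S1 S2 So : Set α)
    [DecidablePred (· ∈ S1)] [DecidablePred (· ∈ S2)] [DecidablePred (· ∈ So)]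
    [DecidablePred (· ∈ S1 ∩ So)] [DecidablePred (· ∈ S2 ∩ So)]
    (hcompat : (S1 ∩ So) ∩ S2 = S1 ∩ (S2 ∩ So))
    (K1 L1 K2 L2 : Set (List α))
    (hK1 : K1 ⊆ L1) (hL1 : L1 ⊆ {w | ∀ a ∈ w, a ∈ S1})
    (hK2 : K2 ⊆ L2) (hL2 : L2 ⊆ {w | ∀ a ∈ w, a ∈ S2})
    (hn1 : {s | proj (S1 ∩ So) s ∈ proj (S1 ∩ So) '' K1} ∩ L1 = K1)
    (hn2 : {s | proj (S2 ∩ So) s ∈ proj (S2 ∩ So) '' K2} ∩ L2 = K2) :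
    {s | proj So s ∈ proj So '' sync S1 S2 K1 K2} ∩ sync S1 S2 L1 L2 =
      sync S1 S2 K1 K2 := by
  ext s
  constructor
  · rintro ⟨⟨t, ⟨ht1, ht2⟩, hst⟩, hs1, hs2⟩
    have key1 : proj (S1 ∩ So) s = proj (S1 ∩ So) t := by
      have h1 : proj (S1 ∩ So) s = proj (S1 ∩ So) (proj So s) := by
        rw [proj_proj]; congr 1; ext a; simp [Set.mem_inter_iff]; try tauto
      have h2 : proj (S1 ∩ So) t = proj (S1 ∩ So) (proj So t) := by
        rw [proj_proj]; congr 1; ext a; simp [Set.mem_inter_iff]; try tauto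
      rw [h1, h2, hst]
    have key2 : proj (S2 ∩ So) s = proj (S2 ∩ So) t := by
      have h1 : proj (S2 ∩ So) s = proj (S2 ∩ So) (proj So s) := by
        rw [proj_proj]; congr 1; ext a; simp [Set.mem_inter_iff]; try tauto
      have h2 : proj (S2 ∩ So) t = proj (S2 ∩ So) (proj So t) := by
        rw [proj_proj]; congr 1; ext a; simp [Set.mem_inter_iff]; try tauto
      rw [h1, h2, hst]
    constructor
    · rw [← hn1]
      refine ⟨?_, hs1⟩
      show proj (S1 ∩ So) (proj S1 s) ∈ proj (S1 ∩ So) '' K1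
      have e1 : proj (S1 ∩ So) (proj S1 s) = proj (S1 ∩ So) s := by
        rw [proj_proj]; congr 1; ext a; simp [Set.mem_inter_iff]; try tauto
      have e2 : proj (S1 ∩ So) (proj S1 t) = proj (S1 ∩ So) t := by
        rw [proj_proj]; congr 1; ext a; simp [Set.mem_inter_iff]; try tauto
      rw [e1, key1, ← e2]
      exact ⟨proj S1 t, ht1, rfl⟩
    · rw [← hn2]
      refine ⟨?_, hs2⟩
      show proj (S2 ∩ So) (proj S2 s) ∈ proj (S2 ∩ So) '' K2
      have e1 : proj (S2 ∩ So) (proj S2 s) = proj (S2 ∩ So) s := by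
        rw [proj_proj]; congr 1; ext a; simp [Set.mem_inter_iff]; try tauto
      have e2 : proj (S2 ∩ So) (proj S2 t) = proj (S2 ∩ So) t := by
        rw [proj_proj]; congr 1; ext a; simp [Set.mem_inter_iff]; try tauto
      rw [e1, key2, ← e2]
      exact ⟨proj S2 t, ht2, rfl⟩
  · rintro ⟨h1, h2⟩
    exact ⟨⟨s, ⟨h1, h2⟩, rfl⟩, hK1 h1, hK2 h2⟩
end

section
/- If G is prognosable (i.e., the 0-prognosability characterization holds: P⁻¹(P(prefixes(Ln \ Ψf^{-0}))) ∩ L ⊆ Ln \ Ψf^{-0}), then Ψf^{-0} is pre-normal w.r.t. L in the inclusion sense: P⁻¹(P(Ψf^{-0})) ∩ L ⊆ Ψf^{-0} ∪ Lf, i.e., no string of L that looks like a string of Ψf^{-0} can be a non-faulty string admitting arbitrarily long non-faulty extensions. Precisely: under the assumption that for every s ∈ P⁻¹(P(Ψf^{-0})) ∩ Ln \ Ψf^{-0}, for every n there exists an extension t of s in L with |t| ≥ n and st ∈ Ln, prognosability fails; contrapositively, prognosability implies P⁻¹(P(Ψf^{-0})) ∩ L ⊆ Ψf^{-0} ∪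 Lf. -/
open List Set

variable {α : Type*}

/-! The prognosability hypothesis says in particular that `K = (L \ Lf) \ Ψf^{-0}` is closed
under observational equivalence within `L`. Then so is its complement `L \ K`, which contains
`Ψf^{-0}`; hence every string of `L` looking like a string of `Ψf^{-0}` lies in `L \ K`, that is,
in `Ψf^{-0} ∪ Lf`. -/

theorem subset_pref (M : Set (List α)) : M ⊆ pref M :=
  fun s hs => ⟨s, hs, List.prefix_refl s⟩

theorem pref_subset_of_prefixClosed {L M : Set (List α)} (hL : prefixClosed L) (hM : M ⊆ L) :
    pref M ⊆ L := by
  rintro t ⟨s, hs, hts⟩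
  exact hL s (hM hs) t hts

theorem preimage_image_inter_subset_diff {γ β : Type*} {f : γ → β} {K L : Set γ}
    (hK : f ⁻¹' (f '' K) ∩ L ⊆ K) : f ⁻¹' (f '' (L \ K)) ∩ L ⊆ L \ K := by
  rintro s ⟨⟨u, ⟨huL, huK⟩, hus⟩, hsL⟩
  refine ⟨hsL, fun hsK => huK (hK ⟨⟨s, hsK, hus.symm⟩, huL⟩)⟩

theorem prognosable_implies_psiMinusZero_saturated_general
    (So : Set α) [DecidablePred (· ∈ So)]
    (L Lf : Set (List α))
    (hL : prefixClosed L) (hLf : Lf ⊆ L)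
    (Psi : Set (List α))
    (hPsiLf : Psi ⊆ Lf)
    (Psi0 : Set (List α))
    (hPsi0 : Psi0 = catStar {s | proj So s ∈ proj So '' Psi} ∩ pref Psi)
    (hprog : {s | proj So s ∈ proj So '' pref ((L \ Lf) \ Psi0)} ∩ L ⊆
        (L \ Lf) \ Psi0) :
    {s | proj So s ∈ proj So '' Psi0} ∩ L ⊆ Psi0 ∪ Lf := by
  set K := (L \ Lf) \ Psi0
  have hK : proj So ⁻¹' (proj So '' K) ∩ L ⊆ K := fun s hs =>
    hprog ⟨image_mono (subset_pref K) hs.1, hs.2⟩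
  have hPsi0 : Psi0 ⊆ L \ K := by
    intro u hu
    have huPref : u ∈ pref Psi := by rw [hPsi0] at hu; exact hu.2
    exact ⟨pref_subset_of_prefixClosed hL (hPsiLf.trans hLf) huPref, fun huK => huK.2 hu⟩
  intro s hs
  obtain ⟨hsL, hsK⟩ :=
    preimage_image_inter_subset_diff hK ⟨image_mono hPsi0 hs.1, hs.2⟩
  by_contra hns
  exact hsK ⟨⟨hsL, fun h => hns (Or.inr h)⟩, fun h => hns (Or.inl h)⟩

/-- prognosability (via the 0-prognosability characterization)
    implies P⁻¹P(Ψf^{-0}) ∩ L ⊆ Ψf^{-0} ∪ Lf, where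
    Ψf^{-0} = P⁻¹P(Ψ(Sf))·Σ* ∩ prefixes(Ψ(Sf)). -/
theorem prognosable_implies_psiMinusZero_saturated
    (So Sf : Set α) [DecidablePred (· ∈ So)]
    (hfo : Sf ∩ So = ∅)
    (L Lf : Set (List α))
    (hL : prefixClosed L) (hLf : Lf ⊆ L)
    (hext : catStar Lf ∩ L ⊆ Lf)
    (hlive : ∀ s ∈ L, ∃ t : List α, t ≠ [] ∧ s ++ t ∈ L)
    (Psi : Set (List α))
    (hPsi : Psi = {s ∈ L | ∃ w : List α, ∃ f ∈ Sf, s = w ++ [f]})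
    (hPsiLf : Psi ⊆ Lf)
    (Psi0 : Set (List α))
    (hPsi0 : Psi0 = catStar {s | proj So s ∈ proj So '' Psi} ∩ pref Psi)
    (hprog : {s | proj So s ∈ proj So '' pref ((L \ Lf) \ Psi0)} ∩ L ⊆
        (L \ Lf) \ Psi0) :
    {s | proj So s ∈ proj So '' Psi0} ∩ L ⊆ Psi0 ∪ Lf :=
  prognosable_implies_psiMinusZero_saturated_general So L Lf hL hLf Psi hPsiLf Psi0 hPsi0 hprog
end
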